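/- arXiv:1609.01877 — 4 statements merged into one kernel-verified Lean document; each statement's English description precedes it below -/
import Mathlib

section
/- Let P = (p_0:p_1:p_2) be a singular point of C and write G_P = c · L_1^{λ_1} ⋯ L_l^{λ_l} with c ∈ K ∖ {0}, pairwise non-proportional linear forms L_i, and integers λ_i ≥ 1, and let v_i ∈ ℙ¹(K) be the root of L_i. Then f^{-1}(P) = {v_1, …, v_l} (so C has exactly l branches at P), and for each i the multiplicity of the branch at v_i equals λ_i, i.e., min_{0≤i'<j'≤2} ord_{v_i}(p_{i'} f_{j'} − p_{j'} f_{i'}) = λ_i. -/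
open MvPolynomial

noncomputable section

/-- The coefficient `a_i` of `s^(n-i) t^i` in a binary form `f` of degree `n`. -/
def bcoeff {K : Type*} [Field K] (n : ℕ) (f : MvPolynomial (Fin 2) K) (i : Fin (n + 1)) : K :=
  MvPolynomial.coeff (Finsupp.single 0 (n - (i : ℕ)) + Finsupp.single 1 (i : ℕ)) f

/-- The binary form of degree `k` with coefficient vector `x`. -/
def formOf {K : Type*} [Field K] (k : ℕ) (x : Fin (k + 1) → K) : MvPolynomial (Fin 2) K :=
  ∑ i : Fin (k + 1),
    MvPolynomial.C (x i) * MvPolynomial.X 0 ^ (k - (i : ℕ)) * MvPolynomial.X 1 ^ (i : ℕ)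

/-- The matrix `M_k` associated to the parameterization `f`: the first `n-k+1` rows contain
the variables `x_0, …, x_k` in staircase position, the last three rows are the coefficient
vectors of `f_0, f_1, f_2`. -/
def Mmat {K : Type*} [Field K] (n k : ℕ) (f : Fin 3 → MvPolynomial (Fin 2) K) :
    Matrix (Fin (n - k + 4)) (Fin (n + 1)) (MvPolynomial (Fin (k + 1)) K) :=
  fun j c =>
    if hj : (j : ℕ) ≤ n - k then
      if h : (j : ℕ) ≤ (c : ℕ) ∧ (c : ℕ) ≤ (j : ℕ) + k then
        MvPolynomial.X ⟨(c : ℕ) - (j : ℕ), by omega⟩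
      else 0
    else
      MvPolynomial.C (bcoeff n (f ⟨(j : ℕ) - (n - k + 1), by have := j.isLt; omega⟩) c)

/-- The set of `(n-k+3) × (n-k+3)` minors of the matrix `M_k`; it generates the ideal
`I_{X_k}`. -/
def minorsSet {K : Type*} [Field K] (n k : ℕ) (f : Fin 3 → MvPolynomial (Fin 2) K) :
    Set (MvPolynomial (Fin (k + 1)) K) :=
  { g | ∃ (r : Fin (n - k + 3) → Fin (n - k + 4)) (c : Fin (n - k + 3) → Fin (n + 1)),
      Function.Injective r ∧ Function.Injective c ∧
      g = ((Mmat n k f).submatrix r c).det }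

/-- The projective zero locus `X_k(K) ⊆ ℙ^k(K)` of the ideal of minors of `M_k`. -/
def XkSet {K : Type*} [Field K] (n k : ℕ) (f : Fin 3 → MvPolynomial (Fin 2) K) :
    Set (Projectivization K (Fin (k + 1) → K)) :=
  { P | ∀ g ∈ minorsSet n k f, MvPolynomial.eval P.rep g = 0 }

/-- Evaluation of the parameterization at a vector `v ∈ K²`. -/
def evalVec {K : Type*} [Field K] (f : Fin 3 → MvPolynomial (Fin 2) K) (v : Fin 2 → K) :
    Fin 3 → K :=
  fun u => MvPolynomial.eval v (f u)

/-- The induced map `f : ℙ¹(K) → ℙ²(K)` (with a junk value where undefined). -/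
def projMap {K : Type*} [Field K] (f : Fin 3 → MvPolynomial (Fin 2) K)
    (P : Projectivization K (Fin 2 → K)) : Projectivization K (Fin 3 → K) :=
  haveI := Classical.propDecidable (evalVec f P.rep ≠ 0)
  if h : evalVec f P.rep ≠ 0 then Projectivization.mk K _ h
  else Projectivization.mk K (fun _ => 1) (fun hc => one_ne_zero (congrFun hc 0))

/-- `f = (f_0, f_1, f_2)` is a proper parameterization of degree `n`: the `f_u` are
homogeneous of degree `n`, have no common zero outside the origin, and the induced map
`ℙ¹(K) → ℙ²(K)` is injective outside some finite set. -/
structure IsProperParam {K : Type*} [Field K] (n : ℕ)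
    (f : Fin 3 → MvPolynomial (Fin 2) K) : Prop where
  homog : ∀ u, (f u).IsHomogeneous n
  no_common_zero : ∀ v : Fin 2 → K, v ≠ 0 → evalVec f v ≠ 0
  gen_injective : ∃ S : Set (Projectivization K (Fin 2 → K)), S.Finite ∧
    Set.InjOn (projMap f) Sᶜ

/-- The homogeneous vanishing ideal of the point `p ∈ ℙ²(K)`. -/
def pointIdeal {K : Type*} [Field K] (p : Fin 3 → K) : Ideal (MvPolynomial (Fin 3) K) :=
  Ideal.span { L | L.IsHomogeneous 1 ∧ MvPolynomial.eval p L = 0 }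

/-- The multiplicity of the curve `{F = 0}` at the point `p`:
the largest `m` with `F ∈ I(p)^m`. -/
def multAt {K : Type*} [Field K] (F : MvPolynomial (Fin 3) K) (p : Fin 3 → K) : ℕ :=
  sSup { m | F ∈ pointIdeal p ^ m }

/-- The cross difference `p_i f_j - p_j f_i`. -/
def crossDiff {K : Type*} [Field K] (f : Fin 3 → MvPolynomial (Fin 2) K) (p : Fin 3 → K)
    (i j : Fin 3) : MvPolynomial (Fin 2) K :=
  MvPolynomial.C (p i) * f j - MvPolynomial.C (p j) * f i

/-- `G` is a greatest common divisor of the three cross differences `p_i f_j - p_j f_i`,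
`0 ≤ i < j ≤ 2`. -/
def IsGcdOfCross {K : Type*} [Field K] (f : Fin 3 → MvPolynomial (Fin 2) K) (p : Fin 3 → K)
    (G : MvPolynomial (Fin 2) K) : Prop :=
  (∀ i j : Fin 3, i < j → G ∣ crossDiff f p i j) ∧
  (∀ D : MvPolynomial (Fin 2) K, (∀ i j : Fin 3, i < j → D ∣ crossDiff f p i j) → D ∣ G)

/-- The linear binary form with root `v = (v 0 : v 1)`. -/
def linFormOf {K : Type*} [Field K] (v : Fin 2 → K) : MvPolynomial (Fin 2) K :=
  MvPolynomial.C (v 1) * MvPolynomial.X 0 - MvPolynomial.C (v 0) * MvPolynomial.X 1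

/-- The multiplicity of `v` as a root of the binary form `h`. -/
def ordAt {K : Type*} [Field K] (v : Fin 2 → K) (h : MvPolynomial (Fin 2) K) : ℕ :=
  sSup { e | linFormOf v ^ e ∣ h }

/-- The point `x ∈ ℙ²` lies on the conic `4 x₀ x₂ - x₁² = 0`. -/
def onConic {K : Type*} [Field K] (x : Fin 3 → K) : Prop :=
  4 * x 0 * x 2 - x 1 ^ 2 = 0


/-! A point `w ≠ 0` of `ℙ¹` is mapped to `P` iff all cross differences `p_i f_j - p_j f_i` vanish
at `w`, i.e. (factor theorem for binary forms) iff the linear form `L_w` with root `w` divides all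
of them, i.e. iff `L_w ∣ G_P`; by the factorization of `G_P` this happens iff `w` is proportional
to some `v_i`. As for multiplicities, `L_i ^ λ_i` divides every cross difference, while
`L_i ^ (λ_i + 1)` does not divide `G_P`, because the remaining factors of `G_P` do not vanish at
`v_i`; by the gcd property it fails to divide one of the cross differences. -/

namespace MvPolynomial

theorem IsHomogeneous.aeval_mul_left {R S σ : Type*} [CommSemiring R] [CommSemiring S]
    [Algebra R S] {h : MvPolynomial σ R} {n : ℕ} (hh : h.IsHomogeneous n) (r : S) (x : σ → S) :
    MvPolynomial.aeval (fun i => r * x i) h = r ^ n * MvPolynomial.aeval x h := by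
  simp only [aeval_eq_eval₂Hom, coe_eval₂Hom, eval₂_eq, Finset.mul_sum]
  refine Finset.sum_congr rfl fun m hm => ?_
  rw [hh.degree_eq_sum_deg_support hm, ← Finset.prod_pow_eq_pow_sum]
  simp only [mul_pow, Finset.prod_mul_distrib]
  ring

theorem dvd_aeval_sub_aeval {R S σ : Type*} [CommSemiring R] [CommRing S] [Algebra R S]
    {a : S} {x y : σ → S} (hxy : ∀ i, a ∣ x i - y i) (h : MvPolynomial σ R) :
    a ∣ aeval x h - aeval y h := by
  have hquot : (Ideal.Quotient.mkₐ R (Ideal.span {a})).comp (aeval x) =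
      (Ideal.Quotient.mkₐ R (Ideal.span {a})).comp (aeval y) :=
    algHom_ext fun i => by
      simpa [Ideal.Quotient.mkₐ_eq_mk, Ideal.Quotient.eq, Ideal.mem_span_singleton] using hxy i
  have := AlgHom.congr_fun hquot h
  rwa [AlgHom.comp_apply, AlgHom.comp_apply, Ideal.Quotient.mkₐ_eq_mk, Ideal.Quotient.eq,
    Ideal.mem_span_singleton] at this

theorem aeval_C_eq_C_eval {R σ : Type*} [CommSemiring R] (w : σ → R) (h : MvPolynomial σ R) :
    aeval (fun i => C (w i) : σ → MvPolynomial σ R) h = C (eval w h) := by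
  rw [aeval_eq_eval₂Hom, coe_eval₂Hom, eval_eq, eval₂_eq, map_sum]
  simp

end MvPolynomial

theorem exists_ne_zero_smul_eq_iff {K ι : Type*} [Field K] [LinearOrder ι] {p q : ι → K}
    (hp : p ≠ 0) (hq : q ≠ 0) :
    (∃ d : K, d ≠ 0 ∧ q = d • p) ↔ ∀ a b, a < b → p a * q b - p b * q a = 0 := by
  refine ⟨?_, fun h => ?_⟩
  · rintro ⟨d, -, rfl⟩ a b -
    simp only [Pi.smul_apply, smul_eq_mul]
    ring
  have hcross : ∀ a b, p a * q b = p b * q a := by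
    intro a b
    rcases lt_trichotomy a b with hab | rfl | hab
    · exact sub_eq_zero.mp (h a b hab)
    · rfl
    · exact (sub_eq_zero.mp (h b a hab)).symm
  obtain ⟨u, hu⟩ : ∃ u, p u ≠ 0 := Function.ne_iff.mp hp
  have hqp : q = (q u / p u) • p := funext fun b => by
    rw [Pi.smul_apply, smul_eq_mul, div_mul_eq_mul_div, eq_div_iff hu]
    linear_combination hcross u b
  refine ⟨q u / p u, fun hd => hq ?_, hqp⟩
  rw [hqp, hd, zero_smul]

section BinaryForms

variable {K : Type*} [Field K]

theorem eval_linFormOf (v w : Fin 2 → K) :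
    eval w (linFormOf v) = v 1 * w 0 - v 0 * w 1 := by
  simp [linFormOf]

theorem eval_linFormOf_self (v : Fin 2 → K) : eval v (linFormOf v) = 0 := by
  rw [eval_linFormOf]
  ring

theorem eval_linFormOf_eq_zero_iff {v w : Fin 2 → K} (hv : v ≠ 0) (hw : w ≠ 0) :
    eval w (linFormOf v) = 0 ↔ ∃ d : K, d ≠ 0 ∧ w = d • v := by
  rw [exists_ne_zero_smul_eq_iff hv hw, eval_linFormOf]
  simp only [Fin.forall_fin_two, Fin.zero_lt_one, forall_const, lt_self_iff_false,
    Fin.not_lt_zero, false_imp_iff, and_true, true_and]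
  rw [← neg_sub, neg_eq_zero]

theorem isHomogeneous_linFormOf (v : Fin 2 → K) : (linFormOf v).IsHomogeneous 1 :=
  (isHomogeneous_C_mul_X _ _).sub (isHomogeneous_C_mul_X _ _)

theorem linFormOf_ne_zero {v : Fin 2 → K} (hv : v ≠ 0) : linFormOf v ≠ 0 := by
  intro h
  have h0 := congrArg (eval ![1, 0]) h
  have h1 := congrArg (eval ![0, 1]) h
  simp only [eval_linFormOf, map_zero] at h0 h1
  exact hv (funext fun j => by fin_cases j <;> simp_all)

theorem linFormOf_not_isUnit (v : Fin 2 → K) : ¬ IsUnit (linFormOf v) := fun hu => by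
  simpa [eval_linFormOf_self] using hu.map (eval v)

theorem eval_eq_zero_of_linFormOf_dvd {w : Fin 2 → K} {h : MvPolynomial (Fin 2) K}
    (hdvd : linFormOf w ∣ h) : eval w h = 0 := by
  obtain ⟨g, rfl⟩ := hdvd
  rw [map_mul, eval_linFormOf_self, zero_mul]

theorem linFormOf_dvd_C_mul_X_sub (w : Fin 2 → K) (i j : Fin 2) :
    linFormOf w ∣ C (w j) * X i - X j * C (w i) := by
  fin_cases i <;> fin_cases j
  · simp [mul_comm]
  · exact dvd_of_eq (by simp [linFormOf, mul_comm])
  · exact dvd_neg.mp (dvd_of_eq (by simp [linFormOf, mul_comm]))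
  · simp [mul_comm]

/-- Modulo `linFormOf w` one has `w j * X i ≡ w i * X j`, so by homogeneity
`w j ^ n * h ≡ h(w) * X j ^ n`. -/
theorem linFormOf_dvd_C_pow_mul_sub {h : MvPolynomial (Fin 2) K} {n : ℕ}
    (hh : h.IsHomogeneous n) (w : Fin 2 → K) (j : Fin 2) :
    linFormOf w ∣ C (w j) ^ n * h - X j ^ n * C (eval w h) := by
  have hscale := hh.aeval_mul_left (C (w j)) X
  have hpoint := hh.aeval_mul_left (X j) (fun i => C (w i))
  rw [aeval_X_left_apply] at hscale
  rw [aeval_C_eq_C_eval] at hpoint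
  rw [← hscale, ← hpoint]
  exact dvd_aeval_sub_aeval (fun i => linFormOf_dvd_C_mul_X_sub w i j) h

theorem linFormOf_dvd_iff_eval_eq_zero {h : MvPolynomial (Fin 2) K} {n : ℕ}
    (hh : h.IsHomogeneous n) {w : Fin 2 → K} (hw : w ≠ 0) :
    linFormOf w ∣ h ↔ eval w h = 0 := by
  refine ⟨eval_eq_zero_of_linFormOf_dvd, fun h0 => ?_⟩
  obtain ⟨j, hj⟩ := Function.ne_iff.mp hw
  have hunit : IsUnit (C (w j) ^ n : MvPolynomial (Fin 2) K) :=
    ((isUnit_iff_ne_zero.mpr hj).map C).pow n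
  simpa [h0, hunit.dvd_mul_left] using linFormOf_dvd_C_pow_mul_sub hh w j

theorem linFormOf_pow_dvd_iff_le_ordAt (v : Fin 2 → K) {h : MvPolynomial (Fin 2) K} (hh : h ≠ 0)
    {e : ℕ} : linFormOf v ^ e ∣ h ↔ e ≤ ordAt v h := by
  have hfin := FiniteMultiplicity.of_not_isUnit (linFormOf_not_isUnit v) hh
  have hset : { e | linFormOf v ^ e ∣ h } = Set.Iic (multiplicity (linFormOf v) h) :=
    Set.ext fun _ => hfin.pow_dvd_iff_le_multiplicity
  rw [ordAt, hset, csSup_Iic]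
  exact hfin.pow_dvd_iff_le_multiplicity

theorem ordAt_eq_of_pow_dvd_of_not_pow_succ_dvd {v : Fin 2 → K} {h : MvPolynomial (Fin 2) K}
    {k : ℕ} (hk : linFormOf v ^ k ∣ h) (hk' : ¬ linFormOf v ^ (k + 1) ∣ h) :
    ordAt v h = k := by
  have hh : h ≠ 0 := by rintro rfl; exact hk' (dvd_zero _)
  rw [linFormOf_pow_dvd_iff_le_ordAt v hh] at hk hk'
  omega

theorem not_linFormOf_pow_succ_dvd_C_mul_prod {l : ℕ} {c : K} (hc : c ≠ 0)
    {v : Fin l → Fin 2 → K} (hv : ∀ i, v i ≠ 0)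
    (hdist : ∀ i j : Fin l, i ≠ j → ∀ d : K, v j ≠ d • v i) (lam : Fin l → ℕ) (i : Fin l) :
    ¬ linFormOf (v i) ^ (lam i + 1) ∣ C c * ∏ j, linFormOf (v j) ^ lam j := by
  rw [← Finset.mul_prod_erase _ _ (Finset.mem_univ i), mul_left_comm, pow_succ,
    mul_dvd_mul_iff_left (pow_ne_zero _ (linFormOf_ne_zero (hv i)))]
  intro hdvd
  have hzero := eval_eq_zero_of_linFormOf_dvd hdvd
  simp only [map_mul, eval_C, map_prod, map_pow, mul_eq_zero, hc, false_or,
    Finset.prod_eq_zero_iff, Finset.mem_erase, pow_eq_zero_iff'] at hzero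
  obtain ⟨j, ⟨hji, -⟩, hzero, -⟩ := hzero
  obtain ⟨d, -, hd⟩ := (eval_linFormOf_eq_zero_iff (hv j) (hv i)).mp hzero
  exact hdist j i hji d hd

theorem isHomogeneous_crossDiff {n : ℕ} {f : Fin 3 → MvPolynomial (Fin 2) K}
    (hf : ∀ u, (f u).IsHomogeneous n) (p : Fin 3 → K) (a b : Fin 3) :
    (crossDiff f p a b).IsHomogeneous n :=
  ((hf b).C_mul _).sub ((hf a).C_mul _)

theorem eval_crossDiff (f : Fin 3 → MvPolynomial (Fin 2) K) (p : Fin 3 → K) (a b : Fin 3)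
    (w : Fin 2 → K) :
    eval w (crossDiff f p a b) = p a * evalVec f w b - p b * evalVec f w a := by
  simp [crossDiff, evalVec]

theorem IsGcdOfCross.dvd_iff {f : Fin 3 → MvPolynomial (Fin 2) K} {p : Fin 3 → K}
    {G : MvPolynomial (Fin 2) K} (hG : IsGcdOfCross f p G) (D : MvPolynomial (Fin 2) K) :
    (∀ a b : Fin 3, a < b → D ∣ crossDiff f p a b) ↔ D ∣ G :=
  ⟨hG.2 D, fun hD a b hab => hD.trans (hG.1 a b hab)⟩

end BinaryForms

theorem statement_10_general {K : Type*} [Field K]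
    (n : ℕ) (f : Fin 3 → MvPolynomial (Fin 2) K)
    (hf : IsProperParam n f)
    (p : Fin 3 → K) (hp : p ≠ 0)
    (G : MvPolynomial (Fin 2) K) (hG : IsGcdOfCross f p G)
    (l : ℕ) (c : K) (hc : c ≠ 0)
    (v : Fin l → Fin 2 → K) (hv : ∀ i, v i ≠ 0)
    (hdist : ∀ i j : Fin l, i ≠ j → ∀ d : K, v j ≠ d • v i)
    (lam : Fin l → ℕ) (hlam : ∀ i, 1 ≤ lam i)
    (hfact : G = MvPolynomial.C c * ∏ i : Fin l, linFormOf (v i) ^ lam i) :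
    -- f⁻¹(P) = {v_1, …, v_l}
    (∀ w : Fin 2 → K, w ≠ 0 →
      ((∃ d : K, d ≠ 0 ∧ evalVec f w = d • p) ↔
        ∃ i : Fin l, ∃ d : K, d ≠ 0 ∧ w = d • v i)) ∧
    -- the branch through v_i has multiplicity λ_i
    (∀ i : Fin l,
      (∀ i' j' : Fin 3, i' < j' → crossDiff f p i' j' ≠ 0 →
        lam i ≤ ordAt (v i) (crossDiff f p i' j')) ∧
      (∃ i' j' : Fin 3, i' < j' ∧ crossDiff f p i' j' ≠ 0 ∧
        ordAt (v i) (crossDiff f p i' j') = lam i)) := by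
  have hGhom : G.IsHomogeneous (∑ i, 1 * lam i) := hfact ▸
    ((IsHomogeneous.prod _ _ _ fun i _ => (isHomogeneous_linFormOf (v i)).pow (lam i)).C_mul c)
  refine ⟨fun w hw => ?_, fun i => ?_⟩
  · calc (∃ d : K, d ≠ 0 ∧ evalVec f w = d • p)
        ↔ ∀ a b : Fin 3, a < b → eval w (crossDiff f p a b) = 0 := by
          simpa only [eval_crossDiff] using exists_ne_zero_smul_eq_iff hp (hf.no_common_zero w hw)
      _ ↔ ∀ a b : Fin 3, a < b → linFormOf w ∣ crossDiff f p a b := by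
          simp only [linFormOf_dvd_iff_eval_eq_zero (isHomogeneous_crossDiff hf.homog p _ _) hw]
      _ ↔ eval w G = 0 := (hG.dvd_iff _).trans (linFormOf_dvd_iff_eval_eq_zero hGhom hw)
      _ ↔ ∃ i, eval w (linFormOf (v i)) = 0 := by
          simp [hfact, hc, Finset.prod_eq_zero_iff, fun i => Nat.one_le_iff_ne_zero.mp (hlam i)]
      _ ↔ ∃ i : Fin l, ∃ d : K, d ≠ 0 ∧ w = d • v i := by
          simp only [eval_linFormOf_eq_zero_iff (hv _) hw]
  · have hpow : linFormOf (v i) ^ lam i ∣ G :=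
      hfact ▸ (Finset.dvd_prod_of_mem _ (Finset.mem_univ i)).mul_left _
    refine ⟨fun a b hab hne =>
      (linFormOf_pow_dvd_iff_le_ordAt _ hne).mp (hpow.trans (hG.1 a b hab)), ?_⟩
    obtain ⟨a, b, hab, hndvd⟩ :
        ∃ a b : Fin 3, a < b ∧ ¬ linFormOf (v i) ^ (lam i + 1) ∣ crossDiff f p a b := by
      by_contra! hall
      exact not_linFormOf_pow_succ_dvd_C_mul_prod hc hv hdist lam i (hfact ▸ hG.2 _ hall)
    exact ⟨a, b, hab, fun h0 => hndvd (h0 ▸ dvd_zero _),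
      ordAt_eq_of_pow_dvd_of_not_pow_succ_dvd (hpow.trans (hG.1 a b hab)) hndvd⟩

/-- Let `P` be a singular point of `C` and write `G_P = c·L_1^{λ_1}⋯L_l^{λ_l}` with pairwise
non-proportional linear forms with roots `v_1, …, v_l`. Then `f⁻¹(P) = {v_1, …, v_l}` (so `C`
has exactly `l` branches at `P`) and the `i`-th branch has multiplicity `λ_i`, i.e.
`min_{i'<j'} ord_{v_i}(p_{i'} f_{j'} - p_{j'} f_{i'}) = λ_i`. -/
theorem statement_10 {K : Type*} [Field K] [IsAlgClosed K] [CharZero K]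
    (n : ℕ) (hn : 3 ≤ n) (f : Fin 3 → MvPolynomial (Fin 2) K)
    (hf : IsProperParam n f)
    (F : MvPolynomial (Fin 3) K) (hFirr : Irreducible F) (hFhom : F.IsHomogeneous n)
    (hFf : MvPolynomial.aeval f F = 0)
    (p : Fin 3 → K) (hp : p ≠ 0) (hsing : 2 ≤ multAt F p)
    (G : MvPolynomial (Fin 2) K) (hG : IsGcdOfCross f p G)
    (l : ℕ) (hl : 1 ≤ l) (c : K) (hc : c ≠ 0)
    (v : Fin l → Fin 2 → K) (hv : ∀ i, v i ≠ 0)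
    (hdist : ∀ i j : Fin l, i ≠ j → ∀ d : K, v j ≠ d • v i)
    (lam : Fin l → ℕ) (hlam : ∀ i, 1 ≤ lam i)
    (hfact : G = MvPolynomial.C c * ∏ i : Fin l, linFormOf (v i) ^ lam i) :
    -- f⁻¹(P) = {v_1, …, v_l}
    (∀ w : Fin 2 → K, w ≠ 0 →
      ((∃ d : K, d ≠ 0 ∧ evalVec f w = d • p) ↔
        ∃ i : Fin l, ∃ d : K, d ≠ 0 ∧ w = d • v i)) ∧
    -- the branch through v_i has multiplicity λ_i
    (∀ i : Fin l,
      (∀ i' j' : Fin 3, i' < j' → crossDiff f p i' j' ≠ 0 →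
        lam i ≤ ordAt (v i) (crossDiff f p i' j')) ∧
      (∃ i' j' : Fin 3, i' < j' ∧ crossDiff f p i' j' ≠ 0 ∧
        ordAt (v i) (crossDiff f p i' j') = lam i)) :=
  statement_10_general n f hf p hp G hG l c hc v hv hdist lam hlam hfact
end
end

section
/- Let K be a field, m ≥ 1 an integer, and φ : K[x,y] → K[t] the K-algebra homomorphism with φ(x) = t² and φ(y) = t^{2m+1}. Then the preimage under φ of the ideal (t^{2m}) is the ideal (y, x^m) of K[x,y], and the preimage under φ of the ideal (t^{2m+2}) is the ideal (y², xy, x^{m+1}) of K[x,y]. -/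
open MvPolynomial

noncomputable section

/-!
Under `φ` the monomial `x^a y^b` goes to `t^(2a + (2m+1)b)`. Two distinct monomials of weight
below `2(2m+1)` have distinct weights, so for `N ≤ 2m + 2` a polynomial maps into `(t^N)` exactly
when each of its monomials has weight at least `N`: the preimage is the monomial ideal spanned by
those monomials, and its minimal generators are read off from the weights.
-/

section WeightedSubstitution

variable {σ K : Type*} [CommSemiring K] (w : σ → ℕ)

theorem aeval_X_pow_monomial (d : σ →₀ ℕ) (a : K) :
    aeval (fun i => (Polynomial.X : Polynomial K) ^ w i) (monomial d a) =
      Polynomial.monomial (Finsupp.weight w d) a := by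
  rw [aeval_monomial, ← Polynomial.C_mul_X_pow_eq_monomial, Finsupp.weight_apply]
  simp only [Finsupp.prod, Finsupp.sum, ← pow_mul, Finset.prod_pow_eq_pow_sum, smul_eq_mul,
    mul_comm, Polynomial.algebraMap_eq]

theorem coeff_aeval_X_pow (f : MvPolynomial σ K) (n : ℕ) :
    (aeval (fun i => (Polynomial.X : Polynomial K) ^ w i) f).coeff n =
      ∑ d ∈ f.support with Finsupp.weight w d = n, f.coeff d := by
  conv_lhs => rw [f.as_sum]
  simp only [map_sum, aeval_X_pow_monomial, Polynomial.finsetSum_coeff, Polynomial.coeff_monomial,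
    Finset.sum_filter]

theorem coeff_aeval_X_pow_weight {f : MvPolynomial σ K} {d : σ →₀ ℕ}
    (hd : ∀ e, Finsupp.weight w e = Finsupp.weight w d → e = d) :
    (aeval (fun i => (Polynomial.X : Polynomial K) ^ w i) f).coeff (Finsupp.weight w d) =
      f.coeff d := by
  rw [coeff_aeval_X_pow]
  refine Finset.sum_eq_single d (fun e he hne => ?_) (fun hd' => ?_)
  · exact absurd (hd e (Finset.mem_filter.1 he).2) hne
  · simpa using hd'

theorem mem_comap_aeval_X_pow_span_X_pow_iff {N : ℕ}
    (hinj : Set.InjOn (Finsupp.weight w) {d : σ →₀ ℕ | Finsupp.weight w d < N})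
    {f : MvPolynomial σ K} :
    f ∈ Ideal.comap (aeval fun i => (Polynomial.X : Polynomial K) ^ w i)
        (Ideal.span {Polynomial.X ^ N}) ↔ ∀ d ∈ f.support, N ≤ Finsupp.weight w d := by
  rw [Ideal.mem_comap, Ideal.mem_span_singleton]
  constructor
  · intro hdvd d hd
    by_contra! hlt
    have hcoeff := Polynomial.X_pow_dvd_iff.1 hdvd _ hlt
    rw [coeff_aeval_X_pow_weight w fun e he => hinj (by simpa [he]) hlt he] at hcoeff
    exact mem_support_iff.1 hd hcoeff
  · intro hweight
    conv_rhs => rw [f.as_sum]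
    rw [map_sum]
    refine Finset.dvd_sum fun d hd => ?_
    rw [aeval_X_pow_monomial, ← Polynomial.C_mul_X_pow_eq_monomial]
    exact Dvd.dvd.mul_left (pow_dvd_pow _ (hweight d hd)) _

theorem comap_aeval_X_pow_span_X_pow_eq_span_monomial {N : ℕ} {S : Set (σ →₀ ℕ)}
    (hinj : Set.InjOn (Finsupp.weight w) {d : σ →₀ ℕ | Finsupp.weight w d < N})
    (hS : ∀ d, N ≤ Finsupp.weight w d ↔ ∃ s ∈ S, s ≤ d) :
    Ideal.comap (aeval fun i => (Polynomial.X : Polynomial K) ^ w i)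
        (Ideal.span {Polynomial.X ^ N}) = Ideal.span ((fun s => monomial s (1 : K)) '' S) := by
  ext f
  rw [mem_comap_aeval_X_pow_span_X_pow_iff w hinj, mem_ideal_span_monomial_image]
  exact forall₂_congr fun d _ => hS d

end WeightedSubstitution

theorem Finsupp.le_iff_fin_two {d e : Fin 2 →₀ ℕ} :
    d ≤ e ↔ d 0 ≤ e 0 ∧ d 1 ≤ e 1 := by
  rw [Finsupp.le_def, Fin.forall_fin_two]

theorem weight_cusp (m : ℕ) (d : Fin 2 →₀ ℕ) :
    Finsupp.weight ![2, 2 * m + 1] d = 2 * d 0 + (2 * m + 1) * d 1 := by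
  simp [Finsupp.weight_eq_sum, Fin.sum_univ_two, mul_comm]

/- Below `2 (2m + 1)` the exponent of `y` is `0` or `1`, and it is the parity of the weight. -/
theorem weight_cusp_injOn (m : ℕ) :
    Set.InjOn (Finsupp.weight ![2, 2 * m + 1])
      {d : Fin 2 →₀ ℕ | Finsupp.weight ![2, 2 * m + 1] d < 2 * (2 * m + 1)} := by
  intro d hd e _ he
  simp only [Set.mem_ofPred_eq, weight_cusp] at hd he
  have hd1 : d 1 < 2 := by by_contra!; nlinarith
  have he1 : e 1 < 2 := by by_contra!; nlinarith
  ext i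
  fin_cases i <;> interval_cases hd1 : d 1 <;> interval_cases he1 : e 1 <;> simp <;> omega

theorem statement_13_general {K : Type*} [Field K] (m : ℕ)
    (φ : MvPolynomial (Fin 2) K →ₐ[K] Polynomial K)
    (hx : φ (MvPolynomial.X 0) = Polynomial.X ^ 2)
    (hy : φ (MvPolynomial.X 1) = Polynomial.X ^ (2 * m + 1)) :
    Ideal.comap φ (Ideal.span {(Polynomial.X : Polynomial K) ^ (2 * m)}) =
      Ideal.span {(MvPolynomial.X 1 : MvPolynomial (Fin 2) K), MvPolynomial.X 0 ^ m} ∧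
    Ideal.comap φ (Ideal.span {(Polynomial.X : Polynomial K) ^ (2 * m + 2)}) =
      Ideal.span {(MvPolynomial.X 1 : MvPolynomial (Fin 2) K) ^ 2,
        MvPolynomial.X 0 * MvPolynomial.X 1, MvPolynomial.X 0 ^ (m + 1)} := by
  obtain rfl :
      φ = aeval fun i => (Polynomial.X : Polynomial K) ^ (![2, 2 * m + 1] : Fin 2 → ℕ) i :=
    algHom_ext (Fin.forall_fin_two.2 ⟨by simp [hx], by simp [hy]⟩)
  have hinj : ∀ N ≤ 2 * m + 2,
      Set.InjOn (Finsupp.weight ![2, 2 * m + 1])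
        {d : Fin 2 →₀ ℕ | Finsupp.weight ![2, 2 * m + 1] d < N} := fun N hN =>
    (weight_cusp_injOn m).mono (Set.ofPred_subset_ofPred.2 fun _ hd => hd.trans_le (by omega))
  constructor
  · rw [comap_aeval_X_pow_span_X_pow_eq_span_monomial _ (hinj _ (by omega))
      (S := {Finsupp.single 1 1, Finsupp.single 0 m})]
    · simp only [Set.image_insert_eq, Set.image_singleton, ← X_pow_eq_monomial, pow_one]
    · intro d
      have hweight : 2 * m ≤ 2 * d 0 + (2 * m + 1) * d 1 ↔ 1 ≤ d 1 ∨ m ≤ d 0 := by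
        rcases d 1 with _ | b
        · omega
        · rw [mul_add_one]; omega
      simpa [weight_cusp, Finsupp.le_iff_fin_two] using hweight
  · rw [comap_aeval_X_pow_span_X_pow_eq_span_monomial _ (hinj _ le_rfl)
      (S := {Finsupp.single 1 2, Finsupp.single 0 1 + Finsupp.single 1 1,
        Finsupp.single 0 (m + 1)})]
    · simp only [Set.image_insert_eq, Set.image_singleton, monomial_add_single,
        ← X_pow_eq_monomial, pow_one]
    · intro d
      have hweight : 2 * m + 2 ≤ 2 * d 0 + (2 * m + 1) * d 1 ↔
          2 ≤ d 1 ∨ 1 ≤ d 0 ∧ 1 ≤ d 1 ∨ m + 1 ≤ d 0 := by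
        rcases d 1 with _ | _ | b
        · omega
        · omega
        · rw [mul_add, mul_add_one]; omega
      simpa [weight_cusp, Finsupp.le_iff_fin_two] using hweight

/-- Let `φ : K[x,y] → K[t]` be the `K`-algebra homomorphism with `φ(x) = t²` and
`φ(y) = t^{2m+1}`. Then `φ⁻¹((t^{2m})) = (y, x^m)` and `φ⁻¹((t^{2m+2})) = (y², xy, x^{m+1})`. -/
theorem statement_13 {K : Type*} [Field K] (m : ℕ) (hm : 1 ≤ m)
    (φ : MvPolynomial (Fin 2) K →ₐ[K] Polynomial K)
    (hx : φ (MvPolynomial.X 0) = Polynomial.X ^ 2)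
    (hy : φ (MvPolynomial.X 1) = Polynomial.X ^ (2 * m + 1)) :
    Ideal.comap φ (Ideal.span {(Polynomial.X : Polynomial K) ^ (2 * m)}) =
      Ideal.span {(MvPolynomial.X 1 : MvPolynomial (Fin 2) K), MvPolynomial.X 0 ^ m} ∧
    Ideal.comap φ (Ideal.span {(Polynomial.X : Polynomial K) ^ (2 * m + 2)}) =
      Ideal.span {(MvPolynomial.X 1 : MvPolynomial (Fin 2) K) ^ 2,
        MvPolynomial.X 0 * MvPolynomial.X 1, MvPolynomial.X 0 ^ (m + 1)} :=
  statement_13_general m φ hx hy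
end
end

section
/- Let K be a field of characteristic different from 2 and m ≥ 1 an integer. In the polynomial ring K[x,y]: (1) the ideal sum (y − x^m) + (y + x^m) equals the ideal (y, x^m); (2) the intersection of the ideals (y − x^m) + (x,y)^{m+1} and (y + x^m) + (x,y)^{m+1} equals the ideal (x^{m+1}, xy, y²). -/
open MvPolynomial

noncomputable section

/-!
Write `𝔪 = (x, y)` and `J = (x^{m+1}, xy, y²)`; `J` is the monomial ideal missing exactly the
monomials `1, x, …, x^m, y`, and it contains `𝔪^{m+1}`. An element of both ideals is
`a(y - x^m) + p = b(y + x^m) + q` with `p, q ∈ 𝔪^{m+1} ⊆ J`. The coefficients of `y` and of `x^m`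
vanish on `J`, so comparing them gives `a(0) = b(0)` and `-a(0) = b(0)`; as `2` is regular,
`a(0) = 0`, i.e. `a ∈ 𝔪`, and `𝔪 (y - x^m) ⊆ J`.
-/

theorem span_sub_sup_span_add {R : Type*} [CommRing R] (h2 : IsUnit (2 : R)) (a b : R) :
    Ideal.span {a - b} ⊔ Ideal.span {a + b} = Ideal.span {a, b} := by
  obtain ⟨u, hu⟩ := h2.exists_left_inv
  apply le_antisymm
  · rw [sup_le_iff, Ideal.span_singleton_le_iff_mem, Ideal.span_singleton_le_iff_mem,
      Ideal.mem_span_pair, Ideal.mem_span_pair]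
    exact ⟨⟨1, -1, by ring⟩, ⟨1, 1, by ring⟩⟩
  · rw [Ideal.span_insert, sup_le_iff, Ideal.span_singleton_le_iff_mem,
      Ideal.span_singleton_le_iff_mem, Submodule.mem_sup, Submodule.mem_sup]
    refine ⟨⟨u * (a - b), Ideal.mem_span_singleton'.2 ⟨u, rfl⟩, u * (a + b),
        Ideal.mem_span_singleton'.2 ⟨u, rfl⟩, by linear_combination a * hu⟩,
      ⟨-u * (a - b), Ideal.mem_span_singleton'.2 ⟨-u, rfl⟩, u * (a + b),
        Ideal.mem_span_singleton'.2 ⟨u, rfl⟩, by linear_combination b * hu⟩⟩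

section CoeffMulXPow

variable {σ R : Type*} [CommSemiring R]

theorem coeff_single_mul_X_pow (a : MvPolynomial σ R) (i : σ) (n : ℕ) :
    coeff (Finsupp.single i n) (a * X i ^ n) = coeff 0 a := by
  simp [X_pow_eq_monomial, coeff_mul_monomial']

theorem coeff_single_mul_X_pow_of_ne (a : MvPolynomial σ R) {i j : σ} (hij : i ≠ j) (n : ℕ)
    {k : ℕ} (hk : k ≠ 0) : coeff (Finsupp.single i n) (a * X j ^ k) = 0 := by
  classical
  rw [X_pow_eq_monomial, coeff_mul_monomial', if_neg]
  intro h
  simpa [hij.symm, hk] using Finsupp.le_def.1 h j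

end CoeffMulXPow

section BivariatePolynomial

variable {R : Type*} [CommRing R]

local notation "𝔪" => (Ideal.span {X 0, X 1} : Ideal (MvPolynomial (Fin 2) R))

theorem span_X_zero_X_one_eq_idealOfVars : 𝔪 = idealOfVars (Fin 2) R := by
  congr 1
  ext p
  simp [Fin.exists_fin_two, eq_comm]

theorem mem_span_X_zero_X_one_of_coeff_zero {a : MvPolynomial (Fin 2) R} (ha : coeff 0 a = 0) :
    a ∈ 𝔪 := by
  rw [span_X_zero_X_one_eq_idealOfVars, ← pow_one (idealOfVars _ _), mem_pow_idealOfVars_iff']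
  intro e he
  rw [Nat.lt_one_iff, Finsupp.degree_eq_zero_iff] at he
  rwa [he]

theorem mem_span_X_pow_X_mul_X_X_sq_iff (m : ℕ) (p : MvPolynomial (Fin 2) R) :
    p ∈ Ideal.span {X 0 ^ (m + 1), X 0 * X 1, X 1 ^ 2} ↔
      ∀ e ∈ p.support, m + 1 ≤ e 0 ∨ (1 ≤ e 0 ∧ 1 ≤ e 1) ∨ 2 ≤ e 1 := by
  have : ({X 0 ^ (m + 1), X 0 * X 1, X 1 ^ 2} : Set (MvPolynomial (Fin 2) R)) =
      (monomial · 1) '' {Finsupp.single 0 (m + 1), Finsupp.single 0 1 + Finsupp.single 1 1,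
        Finsupp.single 1 2} := by
    rw [Set.image_insert_eq, Set.image_insert_eq, Set.image_singleton, X_pow_eq_monomial,
      X_pow_eq_monomial, X, X, monomial_mul, one_mul]
  rw [this, mem_ideal_span_monomial_image]
  refine forall₂_congr fun e _ => ?_
  simp [Finsupp.le_def, Fin.forall_fin_two]

theorem coeff_eq_zero_of_mem_span_X_pow_X_mul_X_X_sq {m : ℕ} {p : MvPolynomial (Fin 2) R}
    (hp : p ∈ Ideal.span {X 0 ^ (m + 1), X 0 * X 1, X 1 ^ 2}) {e : Fin 2 →₀ ℕ}
    (he : e 0 ≤ m ∧ e 1 = 0 ∨ e 0 = 0 ∧ e 1 = 1) : coeff e p = 0 := by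
  by_contra h
  have := (mem_span_X_pow_X_mul_X_X_sq_iff m p).1 hp e (mem_support_iff.2 h)
  omega

theorem pow_span_X_zero_X_one_le {m : ℕ} (hm : 1 ≤ m) :
    𝔪 ^ (m + 1) ≤ Ideal.span {X 0 ^ (m + 1), X 0 * X 1, X 1 ^ 2} := by
  intro p hp
  rw [span_X_zero_X_one_eq_idealOfVars, mem_pow_idealOfVars_iff] at hp
  rw [mem_span_X_pow_X_mul_X_X_sq_iff]
  intro e he
  have := hp e he
  rw [Finsupp.degree_eq_sum, Fin.sum_univ_two] at this
  omega

theorem mul_X_one_sub_X_zero_pow_mem {m : ℕ} (hm : 1 ≤ m) {a : MvPolynomial (Fin 2) R}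
    (ha : a ∈ 𝔪) : a * (X 1 - X 0 ^ m) ∈ Ideal.span {X 0 ^ (m + 1), X 0 * X 1, X 1 ^ 2} := by
  obtain ⟨u, v, rfl⟩ := Ideal.mem_span_pair.1 ha
  obtain ⟨k, rfl⟩ := Nat.exists_eq_add_of_le' hm
  exact Submodule.mem_span_triple.2 ⟨-u, u - v * X 0 ^ k, v, by simp only [smul_eq_mul]; ring⟩

theorem span_X_pow_X_mul_X_X_sq_le_sup {m : ℕ} {f : MvPolynomial (Fin 2) R}
    (hf : X 1 - f ∈ Ideal.span {X 0 ^ m}) :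
    Ideal.span {X 0 ^ (m + 1), X 0 * X 1, X 1 ^ 2} ≤ Ideal.span {f} ⊔ 𝔪 ^ (m + 1) := by
  obtain ⟨c, hc⟩ := Ideal.mem_span_singleton'.1 hf
  have hx : X 0 ∈ 𝔪 := Ideal.subset_span (by simp)
  have hy : X 1 ∈ 𝔪 := Ideal.subset_span (by simp)
  have hmul : ∀ z ∈ 𝔪, z * X 1 ∈ Ideal.span {f} ⊔ 𝔪 ^ (m + 1) := by
    intro z hz
    refine Submodule.mem_sup.2 ⟨z * f, Ideal.mem_span_singleton'.2 ⟨z, rfl⟩, c * (X 0 ^ m * z),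
      Ideal.mul_mem_left _ _ ?_, by linear_combination z * hc⟩
    rw [pow_succ]
    exact Ideal.mul_mem_mul (Ideal.pow_mem_pow hx m) hz
  rw [Ideal.span_le]
  rintro z (rfl | rfl | rfl)
  · exact Ideal.mem_sup_right (Ideal.pow_mem_pow hx _)
  · exact hmul _ hx
  · rw [sq]
    exact hmul _ hy

theorem inf_le_span_X_pow_X_mul_X_X_sq (h2 : IsLeftRegular (2 : R)) {m : ℕ} (hm : 1 ≤ m) :
    (Ideal.span {X 1 - X 0 ^ m} ⊔ 𝔪 ^ (m + 1)) ⊓ (Ideal.span {X 1 + X 0 ^ m} ⊔ 𝔪 ^ (m + 1)) ≤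
      Ideal.span {X 0 ^ (m + 1), X 0 * X 1, X 1 ^ 2} := by
  rintro g ⟨hg₁, hg₂⟩
  obtain ⟨a, p, hp, rfl⟩ := Ideal.mem_span_singleton_sup.1 hg₁
  obtain ⟨b, q, hq, hpq⟩ := Ideal.mem_span_singleton_sup.1 hg₂
  have hJ : a * (X 1 ^ 1 - X 0 ^ m) - b * (X 1 ^ 1 + X 0 ^ m) ∈
      Ideal.span {X 0 ^ (m + 1), X 0 * X 1, X 1 ^ 2} := by
    rw [show a * (X 1 ^ 1 - X 0 ^ m) - b * (X 1 ^ 1 + X 0 ^ m) = q - p by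
      linear_combination -hpq]
    exact sub_mem (pow_span_X_zero_X_one_le hm hq) (pow_span_X_zero_X_one_le hm hp)
  have hm0 : m ≠ 0 := by omega
  have hy := coeff_eq_zero_of_mem_span_X_pow_X_mul_X_X_sq hJ (e := Finsupp.single 1 1) (by simp)
  have hxm := coeff_eq_zero_of_mem_span_X_pow_X_mul_X_X_sq hJ (e := Finsupp.single 0 m) (by simp)
  simp only [mul_sub, mul_add, coeff_sub, coeff_add, coeff_single_mul_X_pow,
    coeff_single_mul_X_pow_of_ne _ one_ne_zero _ hm0,
    coeff_single_mul_X_pow_of_ne _ zero_ne_one _ one_ne_zero] at hy hxm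
  have ha : coeff 0 a = 0 := h2 (show 2 * coeff 0 a = 2 * 0 by linear_combination hy - hxm)
  exact add_mem (mul_X_one_sub_X_zero_pow_mem hm (mem_span_X_zero_X_one_of_coeff_zero ha))
    (pow_span_X_zero_X_one_le hm hp)

end BivariatePolynomial

/-- In `K[x,y]` with `char K ≠ 2`: (1) `(y - x^m) + (y + x^m) = (y, x^m)`;
(2) `((y - x^m) + (x,y)^{m+1}) ∩ ((y + x^m) + (x,y)^{m+1}) = (x^{m+1}, xy, y²)`. -/
theorem statement_14 {K : Type*} [Field K] (h2 : (2 : K) ≠ 0) (m : ℕ) (hm : 1 ≤ m) :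
    (Ideal.span {(MvPolynomial.X 1 : MvPolynomial (Fin 2) K) - MvPolynomial.X 0 ^ m} ⊔
        Ideal.span {(MvPolynomial.X 1 : MvPolynomial (Fin 2) K) + MvPolynomial.X 0 ^ m} =
      Ideal.span {(MvPolynomial.X 1 : MvPolynomial (Fin 2) K), MvPolynomial.X 0 ^ m}) ∧
    ((Ideal.span {(MvPolynomial.X 1 : MvPolynomial (Fin 2) K) - MvPolynomial.X 0 ^ m} ⊔
        (Ideal.span {(MvPolynomial.X 0 : MvPolynomial (Fin 2) K),
          MvPolynomial.X 1}) ^ (m + 1)) ⊓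
      (Ideal.span {(MvPolynomial.X 1 : MvPolynomial (Fin 2) K) + MvPolynomial.X 0 ^ m} ⊔
        (Ideal.span {(MvPolynomial.X 0 : MvPolynomial (Fin 2) K),
          MvPolynomial.X 1}) ^ (m + 1)) =
      Ideal.span {(MvPolynomial.X 0 : MvPolynomial (Fin 2) K) ^ (m + 1),
        MvPolynomial.X 0 * MvPolynomial.X 1, MvPolynomial.X 1 ^ 2}) := by
  have hunit : IsUnit (2 : MvPolynomial (Fin 2) K) := by
    rw [← map_ofNat C 2]
    exact (IsUnit.mk0 (2 : K) h2).map C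
  refine ⟨span_sub_sup_span_add hunit _ _, le_antisymm
    (inf_le_span_X_pow_X_mul_X_X_sq (IsUnit.mk0 _ h2).isRegular.left hm)
    (le_inf (span_X_pow_X_mul_X_X_sq_le_sup ?_) (span_X_pow_X_mul_X_X_sq_le_sup ?_))⟩
  · exact Ideal.mem_span_singleton'.2 ⟨1, by ring⟩
  · exact Ideal.mem_span_singleton'.2 ⟨-1, by ring⟩

end
end

section
/- Let v = (a:b) ∈ ℙ¹(K) and let L = bs − at be a linear form with root v. Then [L²] ∈ X_2(K) if and only if the three 2×2 minors of the 2×3 matrix whose rows are (∂f_0/∂s, ∂f_1/∂s, ∂f_2/∂s) and (∂f_0/∂t, ∂f_1/∂t, ∂f_2/∂t) all vanish at (s,t) = (a,b). In other words, the points of X_2(K) lying on the conic 4x_0x_2 − x_1² = 0 correspond exactly to the parameters where f fails to be an immersion (the tangent lines of ν_n(ℙ¹) that are contracted by the projection). -/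
open MvPolynomial

noncomputable section

lemma fin2_decomp (d : Fin 2 →₀ ℕ) : d = Finsupp.single 0 (d 0) + Finsupp.single 1 (d 1) := by
  ext i
  fin_cases i <;> simp [Finsupp.single_apply]

lemma fin2_degree (d : Fin 2 →₀ ℕ) : d.degree = d 0 + d 1 := by
  rw [Finsupp.degree_apply, Finset.sum_subset (Finset.subset_univ d.support) (by simp)]
  simp [Fin.sum_univ_two]

lemma sub_single0 (p q : ℕ) :
    (Finsupp.single (0 : Fin 2) p + Finsupp.single 1 q) - Finsupp.single 0 1
      = Finsupp.single (0 : Fin 2) (p - 1) + Finsupp.single 1 q := by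
  ext i
  fin_cases i <;> simp [Finsupp.single_apply]

lemma sub_single1 (p q : ℕ) :
    (Finsupp.single (0 : Fin 2) p + Finsupp.single 1 q) - Finsupp.single 1 1
      = Finsupp.single (0 : Fin 2) p + Finsupp.single 1 (q - 1) := by
  ext i
  fin_cases i <;> simp [Finsupp.single_apply]

lemma eval_mono {K : Type*} [Field K] (a b r : K) (p q : ℕ) :
    MvPolynomial.eval ![a, b] (monomial (Finsupp.single 0 p + Finsupp.single 1 q) r)
      = r * a ^ p * b ^ q := by
  rw [eval_monomial, Finsupp.prod_add_index (by simp) (by intros; rw [pow_add]),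
    Finsupp.prod_single_index (by simp), Finsupp.prod_single_index (by simp)]
  simp [mul_assoc]

lemma expand_form {K : Type*} [Field K] {n : ℕ} {g : MvPolynomial (Fin 2) K}
    (hg : g.IsHomogeneous n) :
    g = ∑ c : Fin (n + 1),
      monomial (Finsupp.single 0 (n - (c : ℕ)) + Finsupp.single 1 (c : ℕ)) (bcoeff n g c) := by
  apply MvPolynomial.ext
  intro d
  rw [MvPolynomial.coeff_sum]
  by_cases hd : d 0 + d 1 = n
  · have h1 : (d 1 : ℕ) < n + 1 := by omega
    have hde : (Finsupp.single (0:Fin 2) (n - d 1) + Finsupp.single 1 (d 1)) = d := by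
      conv_rhs => rw [fin2_decomp d]
      congr 2
      omega
    rw [Finset.sum_eq_single (⟨d 1, h1⟩ : Fin (n + 1))]
    · rw [coeff_monomial, if_pos (by simpa only [Fin.val_mk] using hde)]
      simp only [bcoeff]
      congr 1
      simpa only [Fin.val_mk] using hde.symm
    · intro c _ hc
      rw [coeff_monomial, if_neg]
      intro he
      apply hc
      have := DFunLike.congr_fun he 1
      simp [Finsupp.single_apply] at this
      exact Fin.ext (by simp [← this])
    · simp
  · rw [hg.coeff_eq_zero (by rw [fin2_degree]; omega)]
    symm
    apply Finset.sum_eq_zero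
    intro c _
    rw [coeff_monomial, if_neg]
    intro he
    apply hd
    have h0 := DFunLike.congr_fun he 0
    have h1 := DFunLike.congr_fun he 1
    simp [Finsupp.single_apply] at h0 h1
    have := c.isLt
    omega

lemma eval_pderiv0 {K : Type*} [Field K] {n : ℕ} {g : MvPolynomial (Fin 2) K}
    (hg : g.IsHomogeneous n) (a b : K) :
    MvPolynomial.eval ![a, b] (pderiv 0 g)
      = ∑ c : Fin (n + 1),
          bcoeff n g c * ((n - (c : ℕ) : ℕ) : K) * a ^ (n - 1 - (c : ℕ)) * b ^ (c : ℕ) := by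
  conv_lhs => rw [expand_form hg]
  rw [map_sum, map_sum]
  apply Finset.sum_congr rfl
  intro c _
  rw [pderiv_monomial]
  rw [sub_single0, eval_mono]
  rw [show n - (c:ℕ) - 1 = n - 1 - (c:ℕ) from by omega]
  simp [Finsupp.single_apply]

lemma eval_pderiv1 {K : Type*} [Field K] {n : ℕ} {g : MvPolynomial (Fin 2) K}
    (hg : g.IsHomogeneous n) (a b : K) :
    MvPolynomial.eval ![a, b] (pderiv 1 g)
      = ∑ c : Fin (n + 1),
          bcoeff n g c * (((c : ℕ) : ℕ) : K) * a ^ (n - (c : ℕ)) * b ^ ((c : ℕ) - 1) := by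
  conv_lhs => rw [expand_form hg]
  rw [map_sum, map_sum]
  apply Finset.sum_congr rfl
  intro c _
  rw [pderiv_monomial, sub_single1, eval_mono]
  simp [Finsupp.single_apply]


def Yfun {K : Type*} [Field K] (n : ℕ) (a b α β : K) (c : ℕ) : K :=
  α * ((n - c : ℕ) : K) * a ^ (n - 1 - c) * b ^ c + β * ((c : ℕ) : K) * a ^ (n - c) * b ^ (c - 1)

lemma Yfun_rec {K : Type*} [Field K] (n : ℕ) (a b α β : K) (j : ℕ) (hj : j + 2 ≤ n) :
    b ^ 2 * Yfun n a b α β j + (-(2 * a * b)) * Yfun n a b α β (j + 1)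
      + a ^ 2 * Yfun n a b α β (j + 2) = 0 := by
  obtain ⟨m, rfl⟩ : ∃ m, n = j + 2 + m := ⟨n - (j + 2), by omega⟩
  unfold Yfun
  rw [show j + 2 + m - j = m + 2 from by omega,
    show j + 2 + m - 1 - j = m + 1 from by omega,
    show j + 2 + m - (j + 1) = m + 1 from by omega,
    show j + 2 + m - 1 - (j + 1) = m from by omega,
    show j + 2 + m - (j + 2) = m from by omega,
    show j + 2 + m - 1 - (j + 2) = m - 1 from by omega]
  rcases m with _ | m <;> rcases j with _ | j <;> push_cast <;> ring

section RF
variable {K : Type*} [Field K] {n : ℕ} (hn : 3 ≤ n) (f : Fin 3 → MvPolynomial (Fin 2) K)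
  (a b α β : K)

/-- The evaluated matrix `A`. -/
def Amat (n : ℕ) (f : Fin 3 → MvPolynomial (Fin 2) K) (a b : K) :
    Matrix (Fin (n - 2 + 4)) (Fin (n + 1)) K :=
  fun j c => MvPolynomial.eval (![b ^ 2, -(2 * a * b), a ^ 2] : Fin 3 → K) (Mmat n 2 f j c)

lemma Amat_stair_in {j : Fin (n - 2 + 4)} (hj : (j : ℕ) ≤ n - 2) {c : Fin (n + 1)}
    (h : (j : ℕ) ≤ (c : ℕ) ∧ (c : ℕ) ≤ (j : ℕ) + 2) :
    Amat n f a b j c = (![b ^ 2, -(2 * a * b), a ^ 2] : Fin 3 → K) ⟨(c : ℕ) - (j : ℕ), by omega⟩ := by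
  simp only [Amat, Mmat, dif_pos hj, dif_pos h, MvPolynomial.eval_X]

lemma Amat_stair_out {j : Fin (n - 2 + 4)} (hj : (j : ℕ) ≤ n - 2) {c : Fin (n + 1)}
    (h : ¬ ((j : ℕ) ≤ (c : ℕ) ∧ (c : ℕ) ≤ (j : ℕ) + 2)) :
    Amat n f a b j c = 0 := by
  simp only [Amat, Mmat, dif_pos hj, dif_neg h, map_zero]

lemma Amat_frow {j : Fin (n - 2 + 4)} (hj : ¬ (j : ℕ) ≤ n - 2) (c : Fin (n + 1)) :
    Amat n f a b j c
      = bcoeff n (f ⟨(j : ℕ) - (n - 2 + 1), by have := j.isLt; omega⟩) c := by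
  simp only [Amat, Mmat, dif_neg hj, MvPolynomial.eval_C]

include hn in
lemma RF1 {j : Fin (n - 2 + 4)} (hj : (j : ℕ) ≤ n - 2) :
    ∑ c : Fin (n + 1), Amat n f a b j c * Yfun n a b α β (c : ℕ) = 0 := by
  have hJ2 : (j : ℕ) + 2 ≤ n := by omega
  set J := (j : ℕ) with hJ
  have e0 : (⟨J, by omega⟩ : Fin (n + 1)) ≠ ⟨J + 1, by omega⟩ := by
    intro h; exact absurd (congrArg Fin.val h) (by simp)
  have e1 : (⟨J, by omega⟩ : Fin (n + 1)) ≠ ⟨J + 2, by omega⟩ := by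
    intro h; exact absurd (congrArg Fin.val h) (by simp)
  have e2 : (⟨J + 1, by omega⟩ : Fin (n + 1)) ≠ ⟨J + 2, by omega⟩ := by
    intro h; exact absurd (congrArg Fin.val h) (by simp)
  have hsub : ∑ c : Fin (n + 1), Amat n f a b j c * Yfun n a b α β (c : ℕ)
      = ∑ c ∈ ({⟨J, by omega⟩, ⟨J + 1, by omega⟩, ⟨J + 2, by omega⟩} : Finset (Fin (n + 1))),
          Amat n f a b j c * Yfun n a b α β (c : ℕ) := by
    symm
    apply Finset.sum_subset (Finset.subset_univ _)
    intro c _ hc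
    rw [Amat_stair_out f a b hj, zero_mul]
    intro hcon
    apply hc
    simp only [Finset.mem_insert, Finset.mem_singleton]
    have : (c : ℕ) = J ∨ (c : ℕ) = J + 1 ∨ (c : ℕ) = J + 2 := by omega
    rcases this with h | h | h
    · exact Or.inl (Fin.ext h)
    · exact Or.inr (Or.inl (Fin.ext h))
    · exact Or.inr (Or.inr (Fin.ext h))
  rw [hsub, Finset.sum_insert (by simp [e0, e1]), Finset.sum_insert (by simp [e2]),
    Finset.sum_singleton]
  rw [Amat_stair_in f a b hj (by simp [hJ]), Amat_stair_in f a b hj (by simp [hJ]),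
    Amat_stair_in f a b hj (by simp [hJ])]
  have v0 : (⟨J, by omega⟩ : Fin (n+1)).val - J = 0 := by simp
  have v1 : (⟨J+1, by omega⟩ : Fin (n+1)).val - J = 1 := by simp
  have v2 : (⟨J+2, by omega⟩ : Fin (n+1)).val - J = 2 := by simp
  simp only [v0, v1, v2, ← hJ, Nat.sub_self, Nat.add_sub_cancel_left]
  have w0 : (![b ^ 2, -(2 * a * b), a ^ 2] : Fin 3 → K) ⟨0, by omega⟩ = b ^ 2 := rfl
  have w1 : (![b ^ 2, -(2 * a * b), a ^ 2] : Fin 3 → K) ⟨1, by omega⟩ = -(2 * a * b) := rfl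
  have w2 : (![b ^ 2, -(2 * a * b), a ^ 2] : Fin 3 → K) ⟨2, by omega⟩ = a ^ 2 := rfl
  rw [w0, w1, w2]
  show b ^ 2 * Yfun n a b α β J
      + (-(2 * a * b) * Yfun n a b α β (J + 1) + a ^ 2 * Yfun n a b α β (J + 2)) = 0
  rw [← add_assoc]
  exact Yfun_rec n a b α β J hJ2

lemma Amat_frow' (u : Fin 3) {j : Fin (n - 2 + 4)} (hn : 3 ≤ n)
    (hj : (j : ℕ) = n - 2 + 1 + (u : ℕ)) (c : Fin (n + 1)) :
    Amat n f a b j c = bcoeff n (f u) c := by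
  have hj' : ¬ (j : ℕ) ≤ n - 2 := by omega
  simp only [Amat, Mmat, dif_neg hj', MvPolynomial.eval_C]
  congr 2
  exact Fin.ext (by simp [hj])

include hn in
lemma RF2 (u : Fin 3) (hu : (f u).IsHomogeneous n) {j : Fin (n - 2 + 4)}
    (hj : (j : ℕ) = n - 2 + 1 + (u : ℕ)) :
    ∑ c : Fin (n + 1), Amat n f a b j c * Yfun n a b α β (c : ℕ)
      = α * MvPolynomial.eval ![a, b] (MvPolynomial.pderiv 0 (f u))
        + β * MvPolynomial.eval ![a, b] (MvPolynomial.pderiv 1 (f u)) := by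
  rw [eval_pderiv0 hu a b, eval_pderiv1 hu a b, Finset.mul_sum, Finset.mul_sum,
    ← Finset.sum_add_distrib]
  apply Finset.sum_congr rfl
  intro c _
  rw [Amat_frow' f a b u hn hj c]
  unfold Yfun
  ring

include hn in
lemma Amat_entry_val {j : Fin (n - 2 + 4)} (hj : (j : ℕ) ≤ n - 2) (c : Fin (n + 1)) :
    Amat n f a b j c =
      if (c : ℕ) = (j : ℕ) then b ^ 2
      else if (c : ℕ) = (j : ℕ) + 1 then -(2 * a * b)
      else if (c : ℕ) = (j : ℕ) + 2 then a ^ 2 else 0 := by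
  by_cases h : (j : ℕ) ≤ (c : ℕ) ∧ (c : ℕ) ≤ (j : ℕ) + 2
  · rw [Amat_stair_in f a b hj h]
    have : (c : ℕ) - (j : ℕ) = 0 ∨ (c : ℕ) - (j : ℕ) = 1 ∨ (c : ℕ) - (j : ℕ) = 2 := by omega
    rcases this with h0 | h0 | h0 <;> simp only [h0] <;>
      [(rw [if_pos (by omega)]; rfl);
       (rw [if_neg (by omega), if_pos (by omega)]; rfl);
       (rw [if_neg (by omega), if_neg (by omega), if_pos (by omega)]; rfl)]
  · rw [Amat_stair_out f a b hj h, if_neg (by omega), if_neg (by omega), if_neg (by omega)]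

include hn in
lemma Ynonzero (hab : ¬ (a = 0 ∧ b = 0)) (hαβ : ¬ (α = 0 ∧ β = 0)) [CharZero K] :
    ∃ d : Fin (n + 1), Yfun n a b α β (d : ℕ) ≠ 0 := by
  by_cases ha : a = 0
  · have hb : b ≠ 0 := fun h => hab ⟨ha, h⟩
    by_cases hα : α = 0
    · have hβ : β ≠ 0 := fun h => hαβ ⟨hα, h⟩
      refine ⟨⟨n, by omega⟩, ?_⟩
      show Yfun n a b α β n ≠ 0
      unfold Yfun
      rw [hα, Nat.sub_self]
      simp only [Nat.cast_zero, zero_mul, mul_zero, pow_zero, zero_add, mul_one]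
      exact by
        have : β * (n : K) * b ^ (n - 1) ≠ 0 :=
          mul_ne_zero (mul_ne_zero hβ (Nat.cast_ne_zero.2 (by omega))) (pow_ne_zero _ hb)
        simpa using this
    · refine ⟨⟨n - 1, by omega⟩, ?_⟩
      show Yfun n a b α β ((⟨n - 1, by omega⟩ : Fin (n+1)) : ℕ) ≠ 0
      have hv : ((⟨n - 1, by omega⟩ : Fin (n+1)) : ℕ) = n - 1 := rfl
      rw [hv]
      unfold Yfun
      rw [show n - (n - 1) = 1 from by omega, show n - 1 - (n - 1) = 0 from by omega, ha]
      simp only [pow_zero, pow_one, Nat.cast_one, mul_one, one_mul, mul_zero, zero_mul, add_zero]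
      exact mul_ne_zero hα (pow_ne_zero _ hb)
  · by_cases hα : α = 0
    · have hβ : β ≠ 0 := fun h => hαβ ⟨hα, h⟩
      refine ⟨⟨1, by omega⟩, ?_⟩
      show Yfun n a b α β 1 ≠ 0
      unfold Yfun
      rw [hα]
      simp only [zero_mul, Nat.cast_one, mul_one, zero_add, pow_zero, Nat.sub_zero]
      exact by
        have : β * a ^ (n - 1) ≠ 0 := mul_ne_zero hβ (pow_ne_zero _ ha)
        simpa using this
    · refine ⟨⟨0, by omega⟩, ?_⟩
      show Yfun n a b α β 0 ≠ 0
      unfold Yfun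
      simp only [Nat.sub_zero, Nat.cast_zero, zero_mul, mul_zero, pow_zero, mul_one, add_zero,
        Nat.cast_ofNat]
      exact by
        have : α * (n : K) * a ^ (n - 1) ≠ 0 :=
          mul_ne_zero (mul_ne_zero hα (Nat.cast_ne_zero.2 (by omega))) (pow_ne_zero _ ha)
        simpa using this

end RF

def rsel (n : ℕ) (i j : Fin 3) : Fin (n - 2 + 3) → Fin (n - 2 + 4) := fun r' =>
  ⟨if (r' : ℕ) ≤ n - 2 then (r' : ℕ)
    else if (r' : ℕ) = n - 2 + 1 then n - 2 + 1 + (i : ℕ) else n - 2 + 1 + (j : ℕ),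
    by have := i.isLt; have := j.isLt; have := r'.isLt; split_ifs <;> omega⟩

def ccol (n : ℕ) : Fin (n - 2 + 3) → Fin (n + 1) := fun c' =>
  ⟨min (c' : ℕ) n, by omega⟩

lemma ccol_val {n : ℕ} (hn : 3 ≤ n) (c' : Fin (n - 2 + 3)) : ((ccol n c') : ℕ) = (c' : ℕ) := by
  have := c'.isLt
  simp only [ccol]
  omega

lemma rsel_val_stair {n : ℕ} (i j : Fin 3) {r' : Fin (n - 2 + 3)} (h : (r' : ℕ) ≤ n - 2) :
    ((rsel n i j r') : ℕ) = (r' : ℕ) := by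
  simp only [rsel, if_pos h]

lemma rsel_val_r1 {n : ℕ} (i j : Fin 3) {r' : Fin (n - 2 + 3)} (h : (r' : ℕ) = n - 2 + 1) :
    ((rsel n i j r') : ℕ) = n - 2 + 1 + (i : ℕ) := by
  simp only [rsel, if_neg (by omega : ¬ (r' : ℕ) ≤ n - 2), if_pos h]

lemma rsel_val_r2 {n : ℕ} (i j : Fin 3) {r' : Fin (n - 2 + 3)} (h : (r' : ℕ) = n - 2 + 2) :
    ((rsel n i j r') : ℕ) = n - 2 + 1 + (j : ℕ) := by
  simp only [rsel, if_neg (by omega : ¬ (r' : ℕ) ≤ n - 2),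
    if_neg (by omega : ¬ (r' : ℕ) = n - 2 + 1)]

lemma ccol_bij {n : ℕ} (hn : 3 ≤ n) : Function.Bijective (ccol n) := by
  refine (Fintype.bijective_iff_injective_and_card _).2
    ⟨fun x y h => ?_, by simp only [Fintype.card_fin]; omega⟩
  have hv := congrArg Fin.val h
  rw [ccol_val hn, ccol_val hn] at hv
  exact Fin.ext hv

section Steps
variable {K : Type*} [Field K] {n : ℕ} (hn : 3 ≤ n) (f : Fin 3 → MvPolynomial (Fin 2) K)
  (a b α β : K)

include hn in
lemma step_key (i j : Fin 3) (hfh : ∀ u, (f u).IsHomogeneous n) (w : Fin (n - 2 + 3) → K)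
    (hcol : ∀ c' : Fin (n - 2 + 3),
      ∑ r', w r' * Amat n f a b (rsel n i j r') (ccol n c') = 0) :
    w ⟨n - 2 + 1, by omega⟩
        * (α * MvPolynomial.eval ![a, b] (MvPolynomial.pderiv 0 (f i))
            + β * MvPolynomial.eval ![a, b] (MvPolynomial.pderiv 1 (f i)))
      + w ⟨n - 2 + 2, by omega⟩
        * (α * MvPolynomial.eval ![a, b] (MvPolynomial.pderiv 0 (f j))
            + β * MvPolynomial.eval ![a, b] (MvPolynomial.pderiv 1 (f j))) = 0 := by
  have hR1R2 : (⟨n - 2 + 1, by omega⟩ : Fin (n - 2 + 3)) ≠ ⟨n - 2 + 2, by omega⟩ := by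
    intro h; exact absurd (congrArg Fin.val h) (by simp)
  have hT : ∑ c' : Fin (n - 2 + 3),
      (∑ r', w r' * Amat n f a b (rsel n i j r') (ccol n c'))
        * Yfun n a b α β ((ccol n c' : ℕ)) = 0 := by
    apply Finset.sum_eq_zero
    intro c' _
    rw [hcol c', zero_mul]
  have hswap : ∑ c' : Fin (n - 2 + 3),
      (∑ r', w r' * Amat n f a b (rsel n i j r') (ccol n c'))
        * Yfun n a b α β ((ccol n c' : ℕ))
      = ∑ r', w r' * (∑ c', Amat n f a b (rsel n i j r') (ccol n c')
          * Yfun n a b α β ((ccol n c' : ℕ))) := by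
    simp_rw [Finset.sum_mul, Finset.mul_sum, mul_assoc]
    exact Finset.sum_comm
  rw [hswap] at hT
  have hred : ∑ r', w r' * (∑ c', Amat n f a b (rsel n i j r') (ccol n c')
          * Yfun n a b α β ((ccol n c' : ℕ)))
      = ∑ r' ∈ ({⟨n - 2 + 1, by omega⟩, ⟨n - 2 + 2, by omega⟩} : Finset (Fin (n - 2 + 3))),
          w r' * (∑ d : Fin (n + 1), Amat n f a b (rsel n i j r') d
            * Yfun n a b α β (d : ℕ)) := by
    rw [Finset.sum_congr rfl (fun r' _ => by
      rw [Fintype.sum_bijective (ccol n) (ccol_bij hn)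
        (fun c' => Amat n f a b (rsel n i j r') (ccol n c')
          * Yfun n a b α β ((ccol n c' : ℕ)))
        (fun d => Amat n f a b (rsel n i j r') d * Yfun n a b α β (d : ℕ))
        (fun x => rfl)])]
    symm
    apply Finset.sum_subset (Finset.subset_univ _)
    intro r' _ hr'
    simp only [Finset.mem_insert, Finset.mem_singleton] at hr'
    push_neg at hr'
    have hr's : (r' : ℕ) ≤ n - 2 := by
      have h1 : (r' : ℕ) ≠ n - 2 + 1 := fun h => hr'.1 (Fin.ext h)
      have h2 : (r' : ℕ) ≠ n - 2 + 2 := fun h => hr'.2 (Fin.ext h)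
      have := r'.isLt
      omega
    rw [RF1 hn f a b α β (by rw [rsel_val_stair i j hr's]; exact hr's), mul_zero]
  rw [hred, Finset.sum_insert (by simp [hR1R2]), Finset.sum_singleton] at hT
  rw [RF2 hn f a b α β i (hfh i) (rsel_val_r1 i j rfl),
    RF2 hn f a b α β j (hfh j) (rsel_val_r2 i j rfl)] at hT
  exact hT

include hn in
lemma step_stair (i j : Fin 3) (hab : ¬ (a = 0 ∧ b = 0)) (w : Fin (n - 2 + 3) → K)
    (hcol : ∀ c' : Fin (n - 2 + 3),
      ∑ r', w r' * Amat n f a b (rsel n i j r') (ccol n c') = 0)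
    (hwR1 : w ⟨n - 2 + 1, by omega⟩ = 0) (hwR2 : w ⟨n - 2 + 2, by omega⟩ = 0) :
    ∀ m : ℕ, m ≤ n - 2 → ∀ x : Fin (n - 2 + 3), (x : ℕ) = m → w x = 0 := by
  intro m
  induction m using Nat.strong_induction_on with
  | _ m IH =>
    intro hm x hx
    have hother : ∀ r' : Fin (n - 2 + 3), ¬ (r' : ℕ) ≤ n - 2 → w r' = 0 := by
      intro r' h
      have := r'.isLt
      rcases (by omega : (r' : ℕ) = n - 2 + 1 ∨ (r' : ℕ) = n - 2 + 2) with h | h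
      · rw [show r' = ⟨n - 2 + 1, by omega⟩ from Fin.ext h]; exact hwR1
      · rw [show r' = ⟨n - 2 + 2, by omega⟩ from Fin.ext h]; exact hwR2
    by_cases hb : b = 0
    · have ha : a ≠ 0 := fun h => hab ⟨h, hb⟩
      have hcol' := hcol ⟨m + 2, by omega⟩
      rw [Finset.sum_eq_single x] at hcol'
      · rw [Amat_entry_val hn f a b
            (by rw [rsel_val_stair i j (by omega : (x:ℕ) ≤ n - 2)]; omega)] at hcol'
        rw [ccol_val hn, rsel_val_stair i j (by omega : (x:ℕ) ≤ n - 2)] at hcol'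
        simp only [hx, Fin.val_mk] at hcol'
        rw [if_pos trivial, if_neg (by omega), if_neg (by omega)] at hcol'
        rcases mul_eq_zero.mp hcol' with h | h
        · exact h
        · exact absurd h (pow_ne_zero _ ha)
      · intro r' _ hr'
        by_cases hr's : (r' : ℕ) ≤ n - 2
        · rw [Amat_entry_val hn f a b (by rw [rsel_val_stair i j hr's]; exact hr's)]
          rw [ccol_val hn, rsel_val_stair i j hr's]
          have hrne : (r' : ℕ) ≠ m := fun h => hr' (Fin.ext (h.trans hx.symm))
          rw [show ((⟨m + 2, by omega⟩ : Fin (n - 2 + 3)) : ℕ) = m + 2 from rfl]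
          split_ifs with h1 h2 h3
          · simp [hb]
          · simp [hb]
          · omega
          · rw [mul_zero]
        · rw [hother r' hr's, zero_mul]
      · intro h; exact absurd (Finset.mem_univ x) h
    · have hcol' := hcol ⟨m, by omega⟩
      rw [Finset.sum_eq_single x] at hcol'
      · rw [Amat_entry_val hn f a b
            (by rw [rsel_val_stair i j (by omega : (x:ℕ) ≤ n - 2)]; omega)] at hcol'
        rw [ccol_val hn, rsel_val_stair i j (by omega : (x:ℕ) ≤ n - 2)] at hcol'
        simp only [hx, Fin.val_mk] at hcol'
        rw [if_pos trivial] at hcol'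
        rcases mul_eq_zero.mp hcol' with h | h
        · exact h
        · exact absurd h (pow_ne_zero _ hb)
      · intro r' _ hr'
        by_cases hr's : (r' : ℕ) ≤ n - 2
        · rw [Amat_entry_val hn f a b (by rw [rsel_val_stair i j hr's]; exact hr's)]
          rw [ccol_val hn, rsel_val_stair i j hr's]
          have hrne : (r' : ℕ) ≠ m := fun h => hr' (Fin.ext (h.trans hx.symm))
          rw [show ((⟨m, by omega⟩ : Fin (n - 2 + 3)) : ℕ) = m from rfl]
          split_ifs with h1 h2 h3
          · omega
          · rw [IH (r' : ℕ) (by omega) (by omega) r' rfl, zero_mul]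
          · rw [IH (r' : ℕ) (by omega) (by omega) r' rfl, zero_mul]
          · rw [mul_zero]
        · rw [hother r' hr's, zero_mul]
      · intro h; exact absurd (Finset.mem_univ x) h

end Steps

set_option maxHeartbeats 1000000 in
/-- For `v = (a:b) ∈ ℙ¹(K)` and `L = bs - at`, the class `[L²]` (with coefficient vector
`(b², -2ab, a²)`) lies in `X_2(K)` if and only if the three `2×2` minors of the Jacobian
matrix of `(f_0, f_1, f_2)` vanish at `(a, b)`. -/
theorem statement_17 {K : Type*} [Field K] [IsAlgClosed K] [CharZero K]
    (n : ℕ) (hn : 3 ≤ n) (f : Fin 3 → MvPolynomial (Fin 2) K)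
    (hf : IsProperParam n f)
    (a b : K) (hab : ¬ (a = 0 ∧ b = 0)) :
    (∀ g ∈ minorsSet n 2 f,
        MvPolynomial.eval (![b ^ 2, -(2 * a * b), a ^ 2] : Fin 3 → K) g = 0) ↔
      ∀ i j : Fin 3, i < j →
        MvPolynomial.eval (![a, b] : Fin 2 → K)
          (MvPolynomial.pderiv 0 (f i) * MvPolynomial.pderiv 1 (f j)
            - MvPolynomial.pderiv 0 (f j) * MvPolynomial.pderiv 1 (f i)) = 0 := by
  have hps : ∀ i j : Fin 3,
      MvPolynomial.eval (![a, b] : Fin 2 → K)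
          (MvPolynomial.pderiv 0 (f i) * MvPolynomial.pderiv 1 (f j)
            - MvPolynomial.pderiv 0 (f j) * MvPolynomial.pderiv 1 (f i))
        = MvPolynomial.eval ![a, b] (MvPolynomial.pderiv 0 (f i))
            * MvPolynomial.eval ![a, b] (MvPolynomial.pderiv 1 (f j))
          - MvPolynomial.eval ![a, b] (MvPolynomial.pderiv 0 (f j))
            * MvPolynomial.eval ![a, b] (MvPolynomial.pderiv 1 (f i)) := by
    intro i j
    simp only [map_sub, map_mul]
  constructor
  · -- minors vanish → Jacobian minors vanish
    intro hL i j hij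
    rw [hps i j]
    by_contra hD
    have hij' : (i : ℕ) < (j : ℕ) := hij
    have hRinj : Function.Injective (rsel n i j) := by
      intro x y h
      have hx := x.isLt; have hy := y.isLt
      have hv := congrArg Fin.val h
      simp only [rsel] at hv
      apply Fin.ext
      split_ifs at hv <;> omega
    have hmem : ((Mmat n 2 f).submatrix (rsel n i j) (ccol n)).det ∈ minorsSet n 2 f :=
      ⟨rsel n i j, ccol n, hRinj, (ccol_bij hn).1, rfl⟩
    have hdet0 := hL _ hmem
    rw [RingHom.map_det] at hdet0
    have hdet0' : ((Amat n f a b).submatrix (rsel n i j) (ccol n)).det = 0 := hdet0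
    obtain ⟨w, hw0, hw⟩ := Matrix.exists_vecMul_eq_zero_iff.mpr hdet0'
    have hcol : ∀ c' : Fin (n - 2 + 3),
        ∑ r', w r' * Amat n f a b (rsel n i j r') (ccol n c') = 0 := by
      intro c'
      have := congrFun hw c'
      simpa [Matrix.vecMul, dotProduct] using this
    have A1 := step_key hn f a b 1 0 i j hf.homog w hcol
    have A2 := step_key hn f a b 0 1 i j hf.homog w hcol
    simp only [one_mul, zero_mul, add_zero, zero_add] at A1 A2
    have hwR1 : w ⟨n - 2 + 1, by omega⟩ = 0 := by
      have h : w ⟨n - 2 + 1, by omega⟩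
          * (MvPolynomial.eval ![a, b] (MvPolynomial.pderiv 0 (f i))
              * MvPolynomial.eval ![a, b] (MvPolynomial.pderiv 1 (f j))
            - MvPolynomial.eval ![a, b] (MvPolynomial.pderiv 0 (f j))
              * MvPolynomial.eval ![a, b] (MvPolynomial.pderiv 1 (f i))) = 0 := by
        linear_combination MvPolynomial.eval ![a, b] (MvPolynomial.pderiv 1 (f j)) * A1
          - MvPolynomial.eval ![a, b] (MvPolynomial.pderiv 0 (f j)) * A2
      exact (mul_eq_zero.mp h).resolve_right hD
    have hwR2 : w ⟨n - 2 + 2, by omega⟩ = 0 := by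
      have h : w ⟨n - 2 + 2, by omega⟩
          * (MvPolynomial.eval ![a, b] (MvPolynomial.pderiv 0 (f i))
              * MvPolynomial.eval ![a, b] (MvPolynomial.pderiv 1 (f j))
            - MvPolynomial.eval ![a, b] (MvPolynomial.pderiv 0 (f j))
              * MvPolynomial.eval ![a, b] (MvPolynomial.pderiv 1 (f i))) = 0 := by
        linear_combination MvPolynomial.eval ![a, b] (MvPolynomial.pderiv 0 (f i)) * A2
          - MvPolynomial.eval ![a, b] (MvPolynomial.pderiv 1 (f i)) * A1
      exact (mul_eq_zero.mp h).resolve_right hD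
    have hst := step_stair hn f a b i j hab w hcol hwR1 hwR2
    apply hw0
    funext x
    have hx := x.isLt
    by_cases hxs : (x : ℕ) ≤ n - 2
    · exact hst (x : ℕ) hxs x rfl
    · rcases (by omega : (x : ℕ) = n - 2 + 1 ∨ (x : ℕ) = n - 2 + 2) with h | h
      · rw [show x = ⟨n - 2 + 1, by omega⟩ from Fin.ext h]; exact hwR1
      · rw [show x = ⟨n - 2 + 2, by omega⟩ from Fin.ext h]; exact hwR2
  · -- Jacobian minors vanish → minors vanish
    intro hR g hg
    have hps' : ∀ i j : Fin 3, i < j →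
        MvPolynomial.eval ![a, b] (MvPolynomial.pderiv 0 (f i))
            * MvPolynomial.eval ![a, b] (MvPolynomial.pderiv 1 (f j))
          - MvPolynomial.eval ![a, b] (MvPolynomial.pderiv 0 (f j))
            * MvPolynomial.eval ![a, b] (MvPolynomial.pderiv 1 (f i)) = 0 := by
      intro i j h
      rw [← hps i j]
      exact hR i j h
    have sym : ∀ u v : Fin 3,
        MvPolynomial.eval ![a, b] (MvPolynomial.pderiv 0 (f u))
            * MvPolynomial.eval ![a, b] (MvPolynomial.pderiv 1 (f v))
          = MvPolynomial.eval ![a, b] (MvPolynomial.pderiv 0 (f v))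
            * MvPolynomial.eval ![a, b] (MvPolynomial.pderiv 1 (f u)) := by
      intro u v
      rcases lt_trichotomy u v with h | h | h
      · exact sub_eq_zero.mp (hps' u v h)
      · rw [h]
      · exact (sub_eq_zero.mp (hps' v u h)).symm
    obtain ⟨α, β, hαβ, hker⟩ : ∃ α β : K, ¬ (α = 0 ∧ β = 0) ∧
        ∀ u, α * MvPolynomial.eval ![a, b] (MvPolynomial.pderiv 0 (f u))
          + β * MvPolynomial.eval ![a, b] (MvPolynomial.pderiv 1 (f u)) = 0 := by
      by_cases hp : ∀ u, MvPolynomial.eval ![a, b] (MvPolynomial.pderiv 0 (f u)) = 0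
      · exact ⟨1, 0, fun h => one_ne_zero h.1, fun u => by simp [hp u]⟩
      · push_neg at hp
        obtain ⟨u₀, hu₀⟩ := hp
        refine ⟨MvPolynomial.eval ![a, b] (MvPolynomial.pderiv 1 (f u₀)),
          -(MvPolynomial.eval ![a, b] (MvPolynomial.pderiv 0 (f u₀))),
          fun h => hu₀ (neg_eq_zero.mp h.2), fun u => ?_⟩
        linear_combination sym u u₀
    obtain ⟨r, c, hr, hc, rfl⟩ := hg
    have hcb : Function.Bijective c :=
      (Fintype.bijective_iff_injective_and_card c).2 ⟨hc, by simp only [Fintype.card_fin]; omega⟩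
    rw [RingHom.map_det]
    have hdet : ((MvPolynomial.eval (![b ^ 2, -(2 * a * b), a ^ 2] : Fin 3 → K)).mapMatrix
          ((Mmat n 2 f).submatrix r c)).det
        = ((Amat n f a b).submatrix r c).det := rfl
    rw [hdet]
    apply Matrix.exists_mulVec_eq_zero_iff.mp
    obtain ⟨d, hd⟩ := Ynonzero hn a b α β hab hαβ
    obtain ⟨c₀, hc₀⟩ := hcb.2 d
    refine ⟨fun c' => Yfun n a b α β ((c c' : ℕ)), ?_, ?_⟩
    · intro h0
      exact hd (by rw [← hc₀]; exact congrFun h0 c₀)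
    · funext r'
      show ∑ c'', (Amat n f a b) (r r') (c c'') * Yfun n a b α β ((c c'' : ℕ)) = 0
      rw [Fintype.sum_bijective c hcb _
        (fun d => Amat n f a b (r r') d * Yfun n a b α β (d : ℕ)) (fun x => rfl)]
      by_cases hj : ((r r' : ℕ)) ≤ n - 2
      · exact RF1 hn f a b α β hj
      · have hlt := (r r').isLt
        rw [RF2 hn f a b α β ⟨(r r' : ℕ) - (n - 2 + 1), by omega⟩
          (hf.homog _) (by simp only [Fin.val_mk]; omega)]
        exact hker _
end
end
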